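/- arXiv:0903.1168 — 2 statements merged into one kernel-verified Lean document; each statement's English description precedes it below -/
import Mathlib

section
/- Let A be a unital C*-algebra over ℂ, regarded as a ternary Banach algebra with ternary product [x,y,z] := x · (star y) · z, and let r, s, t be real numbers with r > s > 0 and t > 0. Let h : A → A be a mapping with h((r/s) x) = (r/s) h(x) for all x ∈ A, for which there exists a function φ : A × A × A → [0,∞) satisfying lim_{n→∞} (r/s)^{−n} φ((r/s)^n x, (r/s)^n y, (r/s)^n a) = 0 for all x, y, a ∈ A, and ‖r h((μ s x + μ t y + [a,a,a])/r) − μ s h(x) − μ t h(y) − [h(a), h(a), h(a)]‖ ≤ φ(x,y,a) for all μ ∈ ℂ and all x, y, a ∈ A. Then h is a ternary Jordan homomorphism; in particular h is additive, h(μ x) = μ h(x) for all μ ∈ ℂ and x ∈ A, and h([a,a,a]) = [h(a), h(a), h(a)] for all a ∈ A. -/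
/-!
Write `k = r/s > 1`. Homogeneity under `k` lets one rescale every variable by `kⁿ`: taking `a = 0`,
the defect of the Jensen equation gets multiplied by `kⁿ` while the control `φ` grows slower than
`kⁿ`, so the Jensen equation holds exactly and forces `h` to be `ℂ`-linear. Taking `x = y = 0`, the
defect of the ternary identity gets multiplied by `k³ⁿ ≥ kⁿ`, so it vanishes too.
-/

open Filter Topology

theorem map_pow_smul_of_map_smul {M α β : Type*} [Monoid M] [MulAction M α] [MulAction M β]
    {f : α → β} {c : M} (hf : ∀ x, f (c • x) = c • f x) (n : ℕ) (x : α) :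
    f (c ^ n • x) = c ^ n • f x := by
  have := (Function.Semiconj.iterate_right (f := f) hf n) x
  simpa only [smul_iterate] using this

theorem map_zero_of_map_smul {R E F : Type*} [DivisionRing R] [Zero E] [SMulZeroClass R E]
    [AddCommGroup F] [Module R F] {f : E → F} {c : R} (hc : c ≠ 1)
    (hf : f (c • 0) = c • f 0) : f 0 = 0 := by
  rw [smul_zero] at hf
  have : (c - 1) • f 0 = 0 := by rw [sub_smul, one_smul, ← hf, sub_self]
  exact (smul_eq_zero.1 this).resolve_left (sub_ne_zero.2 hc)

theorem eq_zero_of_pow_mul_norm_le {E : Type*} [NormedAddCommGroup E] {k : ℝ} (hk : 0 < k)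
    {u : ℕ → ℝ} (hu : Tendsto (fun n => (k ^ n)⁻¹ * u n) atTop (𝓝 0)) {v : E}
    (hv : ∀ n, k ^ n * ‖v‖ ≤ u n) : v = 0 := by
  refine norm_le_zero_iff.1 (ge_of_tendsto hu (Eventually.of_forall fun n => ?_))
  rw [le_inv_mul_iff₀ (pow_pos hk n)]
  exact hv n

theorem isLinearMap_of_jensen {𝕜 E F : Type*} [Field 𝕜] [AddCommGroup E] [Module 𝕜 E]
    [AddCommGroup F] [Module 𝕜 F] {r s t : 𝕜} (hr : r ≠ 0) (hs : s ≠ 0) (ht : t ≠ 0)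
    {h : E → F}
    (hJ : ∀ (μ : 𝕜) x y, r • h (r⁻¹ • (μ • s • x + μ • t • y)) = μ • s • h x + μ • t • h y) :
    IsLinearMap 𝕜 h := by
  have h0 : h 0 = 0 := by
    simpa [hr] using hJ 0 0 0
  have hsmul : ∀ (μ : 𝕜) x, h (μ • x) = μ • h x := by
    intro μ x
    have hm := hJ (μ * r / s) x 0
    rw [show r⁻¹ • ((μ * r / s) • s • x + (μ * r / s) • t • (0 : E)) = μ • x by
      match_scalars; field_simp, h0, smul_zero, smul_zero, add_zero] at hm
    apply smul_right_injective F hr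
    simp only [hm]
    match_scalars
    field_simp
  refine ⟨fun x y => ?_, hsmul⟩
  have hm := hJ 1 ((r / s) • x) ((r / t) • y)
  rw [show r⁻¹ • ((1 : 𝕜) • s • (r / s) • x + (1 : 𝕜) • t • (r / t) • y) = x + y by
    match_scalars <;> field_simp, hsmul, hsmul] at hm
  apply smul_right_injective F hr
  simp only [hm]
  match_scalars <;> field_simp

theorem ternary_smul_of_star_eq {R A : Type*} [CommSemiring R] [StarRing R] [Semiring A]
    [StarRing A] [Algebra R A] [StarModule R A] {c : R} (hc : star c = c) (a : A) :
    (c • a) * star (c • a) * (c • a) = c ^ 3 • (a * star a * a) := by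
  rw [star_smul, hc, smul_mul_smul_comm, smul_mul_smul_comm, pow_three, mul_assoc]

section Defect

variable {A : Type*} [NormedRing A] [StarRing A] [NormedAlgebra ℂ A]

noncomputable def jensenTernaryDefect (r s t : ℝ) (h : A → A) (μ : ℂ) (x y a : A) : A :=
  (r : ℂ) • h ((r : ℂ)⁻¹ • (μ • (s : ℂ) • x + μ • (t : ℂ) • y + a * star a * a))
    - μ • (s : ℂ) • h x - μ • (t : ℂ) • h y - h a * star (h a) * h a

theorem norm_jensenTernaryDefect_smul_smul_zero {r s t c : ℝ} {h : A → A} (hc : 0 ≤ c)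
    (hscale : ∀ z, h ((c : ℂ) • z) = (c : ℂ) • h z) (h0 : h 0 = 0) (μ : ℂ) (x y : A) :
    ‖jensenTernaryDefect r s t h μ ((c : ℂ) • x) ((c : ℂ) • y) 0‖
      = c * ‖(r : ℂ) • h ((r : ℂ)⁻¹ • (μ • (s : ℂ) • x + μ • (t : ℂ) • y))
          - (μ • (s : ℂ) • h x + μ • (t : ℂ) • h y)‖ := by
  conv_rhs => rw [← Real.norm_of_nonneg hc, ← Complex.norm_real, ← norm_smul]
  rw [jensenTernaryDefect, mul_zero, add_zero, h0, mul_zero, sub_zero,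
    show (r : ℂ)⁻¹ • (μ • (s : ℂ) • (c : ℂ) • x + μ • (t : ℂ) • (c : ℂ) • y)
      = (c : ℂ) • (r : ℂ)⁻¹ • (μ • (s : ℂ) • x + μ • (t : ℂ) • y) by module,
    hscale, hscale, hscale]
  congr 1
  module

theorem norm_jensenTernaryDefect_zero_zero_smul [StarModule ℂ A] {r s t : ℝ} {h : A → A}
    (hr : r ≠ 0) (hlin : IsLinearMap ℂ h) {c : ℝ} (hc : 0 ≤ c) (a : A) :
    ‖jensenTernaryDefect r s t h 0 0 0 ((c : ℂ) • a)‖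
      = c ^ 3 * ‖h (a * star a * a) - h a * star (h a) * h a‖ := by
  have hc' : star (c : ℂ) = c := Complex.conj_ofReal c
  rw [jensenTernaryDefect, zero_smul, zero_smul, zero_add, zero_add, zero_smul, zero_smul,
    sub_zero, sub_zero, hlin.map_smul, ternary_smul_of_star_eq hc', hlin.map_smul,
    hlin.map_smul, ternary_smul_of_star_eq hc', smul_smul,
    mul_inv_cancel₀ (Complex.ofReal_ne_zero.2 hr), one_smul, ← smul_sub, norm_smul,
    norm_pow, Complex.norm_real, Real.norm_of_nonneg hc]

end Defect

theorem stmt_2_general {A : Type*} [NormedRing A] [StarRing A]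
    [NormedAlgebra ℂ A] [StarModule ℂ A]
    (r s t : ℝ) (hrs : r > s) (hs : s > 0) (ht : t > 0)
    (h : A → A)
    (hhom : ∀ x : A, h (((r / s : ℝ) : ℂ) • x) = ((r / s : ℝ) : ℂ) • h x)
    (φ : A → A → A → ℝ)
    (hlim : ∀ x y a : A, Tendsto (fun n : ℕ =>
      ((r / s) ^ n)⁻¹ * φ ((((r / s) ^ n : ℝ) : ℂ) • x) ((((r / s) ^ n : ℝ) : ℂ) • y)
        ((((r / s) ^ n : ℝ) : ℂ) • a)) atTop (𝓝 0))
    (hineq : ∀ (μ : ℂ) (x y a : A),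
      ‖(r : ℂ) • h ((r : ℂ)⁻¹ • (μ • (s : ℂ) • x + μ • (t : ℂ) • y + a * star a * a))
          - μ • (s : ℂ) • h x - μ • (t : ℂ) • h y - h a * star (h a) * h a‖
        ≤ φ x y a) :
    (∀ x y, h (x + y) = h x + h y) ∧
    (∀ (μ : ℂ) (x : A), h (μ • x) = μ • h x) ∧
    (∀ a : A, h (a * star a * a) = h a * star (h a) * h a) := by
  set k := r / s
  have hk1 : 1 < k := (one_lt_div hs).2 hrs
  have hk0 : 0 < k := one_pos.trans hk1
  have hscale : ∀ (n : ℕ) z, h (((k ^ n : ℝ) : ℂ) • z) = ((k ^ n : ℝ) : ℂ) • h z := by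
    push_cast
    exact map_pow_smul_of_map_smul hhom
  have h0 : h 0 = 0 :=
    map_zero_of_map_smul (c := ((k : ℝ) : ℂ)) (by exact_mod_cast hk1.ne') (hhom 0)
  have hlin : IsLinearMap ℂ h := by
    refine isLinearMap_of_jensen (r := (r : ℂ)) (s := (s : ℂ)) (t := (t : ℂ))
      (by exact_mod_cast (hs.trans hrs).ne') (by exact_mod_cast hs.ne') (by exact_mod_cast ht.ne')
      fun μ x y => sub_eq_zero.1 <| eq_zero_of_pow_mul_norm_le hk0 (hlim x y 0) fun n => ?_
    calc _ = ‖jensenTernaryDefect r s t h μ (((k ^ n : ℝ) : ℂ) • x) (((k ^ n : ℝ) : ℂ) • y) 0‖ :=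
          (norm_jensenTernaryDefect_smul_smul_zero (pow_pos hk0 n).le (hscale n) h0 μ x y).symm
      _ ≤ _ := by rw [smul_zero]; exact hineq _ _ _ _
  refine ⟨hlin.map_add, hlin.map_smul, fun a => sub_eq_zero.1 <|
    eq_zero_of_pow_mul_norm_le hk0 (hlim 0 0 a) fun n => ?_⟩
  have hkn : 1 ≤ k ^ n := one_le_pow₀ hk1.le
  calc _ ≤ (k ^ n) ^ 3 * ‖h (a * star a * a) - h a * star (h a) * h a‖ := by
        gcongr
        exact le_self_pow₀ hkn (by norm_num)
    _ = ‖jensenTernaryDefect r s t h 0 0 0 (((k ^ n : ℝ) : ℂ) • a)‖ :=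
        (norm_jensenTernaryDefect_zero_zero_smul (hs.trans hrs).ne' hlin (by positivity) a).symm
    _ ≤ _ := by rw [smul_zero]; exact hineq _ _ _ _

/-- Superstability of ternary Jordan homomorphisms on a C*-algebra with
ternary product `[x,y,z] = x * star y * z`. -/
theorem stmt_2 {A : Type*} [NormedRing A] [StarRing A] [CStarRing A]
    [CompleteSpace A] [NormedAlgebra ℂ A] [StarModule ℂ A]
    (r s t : ℝ) (hrs : r > s) (hs : s > 0) (ht : t > 0)
    (h : A → A)
    (hhom : ∀ x : A, h (((r / s : ℝ) : ℂ) • x) = ((r / s : ℝ) : ℂ) • h x)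
    (φ : A → A → A → ℝ) (hφ0 : ∀ x y a, 0 ≤ φ x y a)
    (hlim : ∀ x y a : A, Tendsto (fun n : ℕ =>
      ((r / s) ^ n)⁻¹ * φ ((((r / s) ^ n : ℝ) : ℂ) • x) ((((r / s) ^ n : ℝ) : ℂ) • y)
        ((((r / s) ^ n : ℝ) : ℂ) • a)) atTop (𝓝 0))
    (hineq : ∀ (μ : ℂ) (x y a : A),
      ‖(r : ℂ) • h ((r : ℂ)⁻¹ • (μ • (s : ℂ) • x + μ • (t : ℂ) • y + a * star a * a))
          - μ • (s : ℂ) • h x - μ • (t : ℂ) • h y - h a * star (h a) * h a‖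
        ≤ φ x y a) :
    (∀ x y, h (x + y) = h x + h y) ∧
    (∀ (μ : ℂ) (x : A), h (μ • x) = μ • h x) ∧
    (∀ a : A, h (a * star a * a) = h a * star (h a) * h a) :=
  stmt_2_general r s t hrs hs ht h hhom φ hlim hineq
end

section
/- Let X and Y be complex normed vector spaces and let h : X → Y be an additive mapping such that h(μ x) = μ h(x) for all μ ∈ 𝕋¹ = {z ∈ ℂ : |z| = 1} and all x ∈ X. Then h is ℂ-linear, i.e., h(λ x) = λ h(x) for all λ ∈ ℂ and all x ∈ X. -/
/-! Every complex number of modulus at most `2` is a sum of two unimodular numbers, and every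
complex number is a sum of `n` numbers of modulus at most `2`; so the unit circle generates `ℂ`
as an additive monoid. The scalars `c` with `h (c • x) = c • h x` for all `x` form an additive
submonoid, since `h` is additive, and it contains the unit circle. -/

open Complex Metric

theorem Complex.exists_norm_eq_one_add_eq {z : ℂ} (hz : ‖z‖ ≤ 2) :
    ∃ μ₁ μ₂ : ℂ, ‖μ₁‖ = 1 ∧ ‖μ₂‖ = 1 ∧ μ₁ + μ₂ = z := by
  -- `z = ‖z‖ e^{iθ}` and `e^{i(θ + α)} + e^{i(θ - α)} = 2 cos α · e^{iθ}` with `2 cos α = ‖z‖`.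
  obtain ⟨θ, hθ⟩ : ∃ θ, θ = z.arg := ⟨_, rfl⟩
  obtain ⟨α, hα⟩ : ∃ α, α = Real.arccos (‖z‖ / 2) := ⟨_, rfl⟩
  have hcos : 2 * Real.cos α = ‖z‖ := by
    rw [hα, Real.cos_arccos (by linarith [norm_nonneg z]) (by linarith)]
    ring
  refine ⟨exp (↑(θ + α) * I), exp (↑(θ - α) * I), norm_exp_ofReal_mul_I _,
    norm_exp_ofReal_mul_I _, ?_⟩
  conv_rhs => rw [← norm_mul_exp_arg_mul_I z, ← hθ, ← hcos]
  push_cast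
  rw [two_cos, add_mul, sub_mul, exp_add, exp_sub, neg_mul, exp_neg, div_eq_mul_inv]
  ring

theorem Complex.addSubmonoidClosure_sphere_eq_top :
    AddSubmonoid.closure (sphere (0 : ℂ) 1) = ⊤ := by
  have hsmall : ∀ z : ℂ, ‖z‖ ≤ 2 → z ∈ AddSubmonoid.closure (sphere (0 : ℂ) 1) := by
    intro z hz
    obtain ⟨μ₁, μ₂, h₁, h₂, rfl⟩ := exists_norm_eq_one_add_eq hz
    exact add_mem (AddSubmonoid.subset_closure (mem_sphere_zero_iff_norm.2 h₁))
      (AddSubmonoid.subset_closure (mem_sphere_zero_iff_norm.2 h₂))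
  refine eq_top_iff.2 fun z _ => ?_
  obtain ⟨n, hn⟩ := exists_nat_gt ‖z‖
  have hn_pos : (0 : ℝ) < n := (norm_nonneg z).trans_lt hn
  have hn₀ : (n : ℂ) ≠ 0 := by exact_mod_cast hn_pos.ne'
  have hz : z = n • (z / n) := by
    rw [nsmul_eq_mul, mul_div_cancel₀ _ hn₀]
  rw [hz]
  refine nsmul_mem (hsmall _ ?_) n
  rw [norm_div, norm_natCast, div_le_iff₀ hn_pos]
  linarith

theorem AddMonoidHom.map_smul_of_mem_addSubmonoidClosure {R M N : Type*} [Semiring R]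
    [AddCommMonoid M] [Module R M] [AddCommMonoid N] [Module R N] (f : M →+ N) {s : Set R}
    (hs : ∀ c ∈ s, ∀ x, f (c • x) = c • f x) {c : R} (hc : c ∈ AddSubmonoid.closure s)
    (x : M) : f (c • x) = c • f x := by
  induction hc using AddSubmonoid.closure_induction with
  | mem c hc => exact hs c hc x
  | zero => simp
  | add a b _ _ ha hb => rw [add_smul, map_add, ha, hb, add_smul]

/-- An additive map between complex normed spaces that is homogeneous with
respect to all unit-modulus scalars is `ℂ`-linear. -/
theorem stmt_11 {X Y : Type*} [NormedAddCommGroup X] [NormedSpace ℂ X]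
    [NormedAddCommGroup Y] [NormedSpace ℂ Y]
    (h : X → Y) (hadd : ∀ x y : X, h (x + y) = h x + h y)
    (hT : ∀ μ : ℂ, ‖μ‖ = 1 → ∀ x : X, h (μ • x) = μ • h x) :
    ∀ (l : ℂ) (x : X), h (l • x) = l • h x := by
  intro l x
  refine (AddMonoidHom.mk' h hadd).map_smul_of_mem_addSubmonoidClosure
    (fun μ hμ => hT μ (mem_sphere_zero_iff_norm.1 hμ)) ?_ x
  rw [addSubmonoidClosure_sphere_eq_top]
  exact AddSubmonoid.mem_top l
end
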